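/- The function $h_2(x) = \ln\frac{\cos x}{\sin x} - \frac{x}{2\sin x} - \frac{\pi}{2}$ is strictly monotonically decreasing on $(0, \pi/2)$. -/

import Mathlib

/-!
Write `h2 x = log (cos x / sin x) - (x / sin x) / 2 - π / 2`. The cotangent decreases on `(0, π)`
(its derivative is `-1 / sin² x`) and is positive on `(0, π / 2)`, so the logarithmic term
decreases; `x / sin x` increases on `(0, π)` since its derivative has numerator
`sin x - x cos x > 0`.
-/

open Real

noncomputable def h2 (x : ℝ) : ℝ :=
  Real.log (Real.cos x / Real.sin x) - x / (2 * Real.sin x) - π / 2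

open Set

namespace Real

lemma mul_cos_lt_sin {x : ℝ} (h0 : 0 < x) (hπ : x < π) : x * cos x < sin x := by
  rcases lt_or_ge x (π / 2) with hx | hx
  · have hc : 0 < cos x := cos_pos_of_mem_Ioo ⟨by linarith, hx⟩
    simpa [tan_eq_sin_div_cos, lt_div_iff₀ hc] using lt_tan h0 hx
  · have hc : cos x ≤ 0 := cos_nonpos_of_pi_div_two_le_of_le hx (by linarith)
    have hs : 0 < sin x := sin_pos_of_pos_of_lt_pi h0 hπ
    nlinarith

lemma strictAntiOn_cos_div_sin : StrictAntiOn (fun x ↦ cos x / sin x) (Ioo 0 π) := by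
  refine strictAntiOn_of_hasDerivWithinAt_neg (convex_Ioo 0 π)
    (f' := fun x ↦ (-sin x * sin x - cos x * cos x) / sin x ^ 2) ?_ ?_ ?_
  · exact continuous_cos.continuousOn.div continuous_sin.continuousOn
      fun x hx ↦ (sin_pos_of_pos_of_lt_pi hx.1 hx.2).ne'
  · rw [interior_Ioo]
    exact fun x hx ↦ ((hasDerivAt_cos x).div (hasDerivAt_sin x)
      (sin_pos_of_pos_of_lt_pi hx.1 hx.2).ne').hasDerivWithinAt
  · rw [interior_Ioo]
    intro x hx
    have hs : 0 < sin x := sin_pos_of_pos_of_lt_pi hx.1 hx.2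
    exact div_neg_of_neg_of_pos (by nlinarith [cos_sq_add_sin_sq x]) (by positivity)

lemma strictMonoOn_div_sin : StrictMonoOn (fun x ↦ x / sin x) (Ioo 0 π) := by
  refine strictMonoOn_of_hasDerivWithinAt_pos (convex_Ioo 0 π)
    (f' := fun x ↦ (1 * sin x - x * cos x) / sin x ^ 2) ?_ ?_ ?_
  · exact continuousOn_id.div continuous_sin.continuousOn
      fun x hx ↦ (sin_pos_of_pos_of_lt_pi hx.1 hx.2).ne'
  · rw [interior_Ioo]
    exact fun x hx ↦ ((hasDerivAt_id x).div (hasDerivAt_sin x)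
      (sin_pos_of_pos_of_lt_pi hx.1 hx.2).ne').hasDerivWithinAt
  · rw [interior_Ioo]
    intro x hx
    have hs : 0 < sin x := sin_pos_of_pos_of_lt_pi hx.1 hx.2
    exact div_pos (by linarith [mul_cos_lt_sin hx.1 hx.2]) (by positivity)

lemma strictAntiOn_log_cos_div_sin :
    StrictAntiOn (fun x ↦ log (cos x / sin x)) (Ioo 0 (π / 2)) := by
  intro a ha b hb hab
  have hπ : Ioo 0 (π / 2) ⊆ Ioo 0 π := Ioo_subset_Ioo_right (half_le_self pi_pos.le)
  have hb_pos : 0 < cos b / sin b :=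
    div_pos (cos_pos_of_mem_Ioo ⟨by linarith [hb.1, pi_pos], hb.2⟩)
      (sin_pos_of_pos_of_lt_pi hb.1 (hπ hb).2)
  exact log_lt_log hb_pos (strictAntiOn_cos_div_sin (hπ ha) (hπ hb) hab)

end Real

theorem h2_strictAntiOn : StrictAntiOn h2 (Set.Ioo 0 (π / 2)) := by
  intro a ha b hb hab
  have hπ : Ioo 0 (π / 2) ⊆ Ioo 0 π := Ioo_subset_Ioo_right (half_le_self pi_pos.le)
  have hlog := strictAntiOn_log_cos_div_sin ha hb hab
  have hdiv := strictMonoOn_div_sin (hπ ha) (hπ hb) hab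
  simp only [h2, div_mul_eq_div_div_swap] at hlog hdiv ⊢
  linarith
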